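/- arXiv:2407.09267 — 2 statements merged into one kernel-verified Lean document; each statement's English description precedes it below -/
import Mathlib

section
/- Let d ≥ 1 and let g_t(x,y) := (4πt)^{-d/2} exp(-|x-y|²/(4t)) denote the Gauss–Weierstrass kernel on ℝ^d. Let u : (0,∞) × ℝ^d × ℝ^d → [0,∞) be measurable, let φ₀ : ℝ^d → [0,∞) be bounded and measurable, and let λ₀ > 0 be such that e^{-λ₀ t} φ₀(x) = ∫_{ℝ^d} u_t(x,y) φ₀(y) dy for all x ∈ ℝ^d and t > 0. Let W : ℝ^d → (0,∞) satisfy W(x) → ∞ as |x| → ∞, and suppose there exist constants c₁, A > 0 and a ≥ 1 such that for all x ≠ 0, all y ∈ ℝ^d and all t > 0, u_t(x,y) ≤ c₁ exp(−( A W(x) t ∧ √(W(x)) |x| )) g_{at}(x,y), where ∧ denotes minimum. Then for every ε > 0 there exist c₂ > 0 and ρ > 0 such that φ₀(x) ≤ c₂ ‖φ₀‖_∞ exp(−(1−ε) √(W(x)) |x|) for all |x| > ρ, where ‖φ₀‖_∞ denotes the supremum norm of φ₀. -/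
/-!
Integrating the kernel bound against `φ₀ ≤ ‖φ₀‖_∞` and using that the Gauss–Weierstrass kernel
has total mass one gives `φ₀(x) ≤ c₁ ‖φ₀‖_∞ exp(λ₀ t - min (A W(x) t) (√W(x) |x|))` for every
`t > 0`. The time `t = |x| / (A √W(x))` balances the two terms of the minimum, and the price
`λ₀ t` is at most `ε √W(x) |x|` as soon as `W(x) ≥ λ₀ / (A ε)`, which holds for large `|x|`.
-/

open Real Filter MeasureTheory

section GaussWeierstrass

variable {V : Type*} [NormedAddCommGroup V] [InnerProductSpace ℝ V] [FiniteDimensional ℝ V]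
  [MeasurableSpace V] [BorelSpace V]

noncomputable def gaussWeierstrassKernel (t : ℝ) (x y : V) : ℝ :=
  (4 * π * t) ^ (-(Module.finrank ℝ V : ℝ) / 2) * exp (-‖x - y‖ ^ 2 / (4 * t))

theorem integral_exp_neg_norm_sub_sq_div {t : ℝ} (ht : 0 < t) (x : V) :
    ∫ y, exp (-‖x - y‖ ^ 2 / (4 * t)) = (4 * π * t) ^ ((Module.finrank ℝ V : ℝ) / 2) := by
  have hb : 0 < (4 * t)⁻¹ := by positivity
  calc ∫ y, exp (-‖x - y‖ ^ 2 / (4 * t)) = ∫ y, exp (-(4 * t)⁻¹ * ‖x - y‖ ^ 2) := by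
        congr 1 with y; ring_nf
    _ = (π / (4 * t)⁻¹) ^ ((Module.finrank ℝ V : ℝ) / 2) :=
        (integral_sub_left_eq_self (fun v : V => exp (-(4 * t)⁻¹ * ‖v‖ ^ 2)) volume x).trans
          (GaussianFourier.integral_rexp_neg_mul_sq_norm hb)
    _ = (4 * π * t) ^ ((Module.finrank ℝ V : ℝ) / 2) := by rw [div_inv_eq_mul]; ring_nf

theorem integral_gaussWeierstrassKernel {t : ℝ} (ht : 0 < t) (x : V) :
    ∫ y, gaussWeierstrassKernel t x y = 1 := by
  simp only [gaussWeierstrassKernel]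
  rw [integral_const_mul, integral_exp_neg_norm_sub_sq_div ht,
    ← rpow_add (by positivity), neg_div, neg_add_cancel, rpow_zero]

theorem integrable_gaussWeierstrassKernel {t : ℝ} (ht : 0 < t) (x : V) :
    Integrable (gaussWeierstrassKernel t x) :=
  Integrable.of_integral_ne_zero (by rw [integral_gaussWeierstrassKernel ht]; exact one_ne_zero)

end GaussWeierstrass

theorem le_mul_exp_of_exp_neg_mul_eq_integral {α : Type*} [MeasurableSpace α] {μ : Measure α}
    {k g φ : α → ℝ} {p s C M : ℝ} (heig : exp (-s) * p = ∫ y, k y * φ y ∂μ)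
    (hk_nonneg : ∀ y, 0 ≤ k y) (hk_le : ∀ y, k y ≤ C * g y) (hg : Integrable g μ)
    (hg_one : ∫ y, g y ∂μ = 1) (hφ_nonneg : ∀ y, 0 ≤ φ y) (hφ_le : ∀ y, φ y ≤ M) :
    p ≤ C * M * exp s := by
  have hpointwise : ∀ y, k y * φ y ≤ M * (C * g y) := fun y => by
    rw [mul_comm M]
    exact mul_le_mul (hk_le y) (hφ_le y) (hφ_nonneg y) ((hk_nonneg y).trans (hk_le y))
  have hintegral : ∫ y, k y * φ y ∂μ ≤ ∫ y, M * (C * g y) ∂μ :=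
    integral_mono_of_nonneg (.of_forall fun y => mul_nonneg (hk_nonneg y) (hφ_nonneg y))
      ((hg.const_mul C).const_mul M) (.of_forall hpointwise)
  calc p = exp s * (exp (-s) * p) := by
        rw [← mul_assoc, ← exp_add, add_neg_cancel, exp_zero, one_mul]
    _ = exp s * ∫ y, k y * φ y ∂μ := by rw [heig]
    _ ≤ exp s * ∫ y, M * (C * g y) ∂μ := by gcongr
    _ = C * M * exp s := by rw [integral_const_mul, integral_const_mul, hg_one]; ring

theorem exists_pos_mul_sub_min_le {lam A w r ε : ℝ} (hA : 0 < A) (hw : 0 < w) (hr : 0 < r)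
    (hlam : lam ≤ A * ε * w) :
    ∃ t > 0, lam * t - min (A * w * t) (√w * r) ≤ -(1 - ε) * (√w * r) := by
  set t := r / (A * √w)
  have hbalance : A * w * t = √w * r := by
    simp only [t]
    field_simp
    linear_combination -sq_sqrt hw.le
  have hprice : lam * t ≤ ε * (√w * r) := by
    calc lam * t ≤ A * ε * w * t := by gcongr
      _ = ε * (√w * r) := by rw [← hbalance]; ring
  refine ⟨t, by positivity, ?_⟩
  rw [hbalance, min_self]
  linarith

theorem ground_state_upper_bound_general (d : ℕ)
    (u : ℝ → EuclideanSpace ℝ (Fin d) → EuclideanSpace ℝ (Fin d) → ℝ)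
    (hu_nonneg : ∀ t, 0 < t → ∀ x y, 0 ≤ u t x y)
    (φ : EuclideanSpace ℝ (Fin d) → ℝ)
    (hφ_nonneg : ∀ x, 0 ≤ φ x)
    (hφ_bdd : ∃ M : ℝ, ∀ x, φ x ≤ M)
    (lam : ℝ)
    (heig : ∀ x, ∀ t, 0 < t → Real.exp (-lam * t) * φ x = ∫ y, u t x y * φ y)
    (W : EuclideanSpace ℝ (Fin d) → ℝ) (hW_pos : ∀ x, 0 < W x)
    (hW : Tendsto W (Bornology.cobounded (EuclideanSpace ℝ (Fin d))) atTop)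
    (c₁ A a : ℝ) (hc₁ : 0 < c₁) (hA : 0 < A) (ha : 1 ≤ a)
    (hker : ∀ t, 0 < t → ∀ x y : EuclideanSpace ℝ (Fin d), x ≠ 0 →
      u t x y ≤ c₁ * Real.exp (-(min (A * W x * t) (Real.sqrt (W x) * ‖x‖))) *
        ((4 * π * (a * t)) ^ (-(d : ℝ) / 2) * Real.exp (-‖x - y‖ ^ 2 / (4 * (a * t))))) :
    ∀ ε : ℝ, 0 < ε → ∃ c₂ : ℝ, 0 < c₂ ∧ ∃ ρ : ℝ, 0 < ρ ∧
      ∀ x : EuclideanSpace ℝ (Fin d), ρ < ‖x‖ →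
        φ x ≤ c₂ * (⨆ y : EuclideanSpace ℝ (Fin d), φ y) *
          Real.exp (-(1 - ε) * Real.sqrt (W x) * ‖x‖) := by
  intro ε hε
  obtain ⟨M₀, hM₀⟩ := hφ_bdd
  have hφ_le : ∀ x, φ x ≤ ⨆ y, φ y := le_ciSup ⟨M₀, Set.forall_mem_range.mpr hM₀⟩
  obtain ⟨R, hR⟩ : ∃ R, ∀ x : EuclideanSpace ℝ (Fin d), R ≤ ‖x‖ → lam ≤ A * ε * W x := by
    have hev := (hW.const_mul_atTop (mul_pos hA hε)).eventually_ge_atTop lam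
    rw [← comap_norm_atTop, eventually_comap, eventually_atTop] at hev
    obtain ⟨R, hR⟩ := hev
    exact ⟨R, fun x hx => hR ‖x‖ hx x rfl⟩
  refine ⟨c₁, hc₁, max R 1, by positivity, fun x hx => ?_⟩
  have hx_pos : 0 < ‖x‖ := (lt_of_lt_of_le one_pos (le_max_right R 1)).trans hx
  obtain ⟨t, ht, hdecay⟩ := exists_pos_mul_sub_min_le hA (hW_pos x) hx_pos
    (hR x ((le_max_left R 1).trans hx.le))
  have hat : 0 < a * t := by positivity
  have hbound := le_mul_exp_of_exp_neg_mul_eq_integral (by rw [← neg_mul]; exact heig x t ht)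
    (hu_nonneg t ht x) (fun y => by
      simpa only [gaussWeierstrassKernel, finrank_euclideanSpace_fin]
        using hker t ht x y (norm_pos_iff.mp hx_pos))
    (integrable_gaussWeierstrassKernel hat x) (integral_gaussWeierstrassKernel hat x)
    hφ_nonneg hφ_le
  have hM : 0 ≤ ⨆ y, φ y := (hφ_nonneg 0).trans (hφ_le 0)
  calc φ x ≤ c₁ * (⨆ y, φ y) * exp (lam * t - min (A * W x * t) (√(W x) * ‖x‖)) :=
        hbound.trans_eq (by rw [sub_eq_add_neg, exp_add]; ring)
    _ ≤ c₁ * (⨆ y, φ y) * exp (-(1 - ε) * √(W x) * ‖x‖) := by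
        rw [mul_assoc (-(1 - ε))]; gcongr

/-- Proposition 3.1 (abstract form): upper bound for the ground state from a
Gaussian-with-decay upper bound on the semigroup kernel. -/
theorem ground_state_upper_bound (d : ℕ) (hd : 1 ≤ d)
    (u : ℝ → EuclideanSpace ℝ (Fin d) → EuclideanSpace ℝ (Fin d) → ℝ)
    (hu_meas : Measurable fun p : ℝ × EuclideanSpace ℝ (Fin d) × EuclideanSpace ℝ (Fin d) =>
      u p.1 p.2.1 p.2.2)
    (hu_nonneg : ∀ t, 0 < t → ∀ x y, 0 ≤ u t x y)
    (φ : EuclideanSpace ℝ (Fin d) → ℝ)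
    (hφ_meas : Measurable φ) (hφ_nonneg : ∀ x, 0 ≤ φ x)
    (hφ_bdd : ∃ M : ℝ, ∀ x, φ x ≤ M)
    (lam : ℝ) (hlam : 0 < lam)
    (heig : ∀ x, ∀ t, 0 < t → Real.exp (-lam * t) * φ x = ∫ y, u t x y * φ y)
    (W : EuclideanSpace ℝ (Fin d) → ℝ) (hW_pos : ∀ x, 0 < W x)
    (hW : Tendsto W (Bornology.cobounded (EuclideanSpace ℝ (Fin d))) atTop)
    (c₁ A a : ℝ) (hc₁ : 0 < c₁) (hA : 0 < A) (ha : 1 ≤ a)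
    (hker : ∀ t, 0 < t → ∀ x y : EuclideanSpace ℝ (Fin d), x ≠ 0 →
      u t x y ≤ c₁ * Real.exp (-(min (A * W x * t) (Real.sqrt (W x) * ‖x‖))) *
        ((4 * π * (a * t)) ^ (-(d : ℝ) / 2) * Real.exp (-‖x - y‖ ^ 2 / (4 * (a * t))))) :
    ∀ ε : ℝ, 0 < ε → ∃ c₂ : ℝ, 0 < c₂ ∧ ∃ ρ : ℝ, 0 < ρ ∧
      ∀ x : EuclideanSpace ℝ (Fin d), ρ < ‖x‖ →
        φ x ≤ c₂ * (⨆ y : EuclideanSpace ℝ (Fin d), φ y) *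
          Real.exp (-(1 - ε) * Real.sqrt (W x) * ‖x‖) :=
  ground_state_upper_bound_general d u hu_nonneg φ hφ_nonneg hφ_bdd lam heig W hW_pos hW c₁ A a hc₁
    hA ha hker
end

section
/- Let d ≥ 1 and let g_t(x,y) := (4πt)^{-d/2} exp(-|x-y|²/(4t)) denote the Gauss–Weierstrass kernel on ℝ^d. Let a, b > 1 satisfy 1/a + 1/b = 1. Then for all x, y ∈ ℝ^d and all t > 0, ( ∫_{ℝ^d} g_{t/a}(x,z) (g_{t/b}(z,y))^a dz )^{1/a} ≤ a^{d/2} b^{d/(2b)} g_{at}(x,y). -/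
/-!
Raising a heat kernel to the power `a` gives a constant multiple of the heat kernel at time
`t / a`, so by the Chapman–Kolmogorov identity `∫ g_s(x,z) g_u(z,y) dz = g_{s+u}(x,y)` the
`a`-th power of the left-hand side is an explicit multiple of `g_s(x,y)` with
`s = t/a + t/(ab) ≤ t`.
Since `u^{d/2} g_u(x,y)` is increasing in `u` and `t ≤ a s`, we get `g_s ≤ a^{d/2} g_t`; what is
left is an identity between constants, which holds because `a / b = a - 1`.
-/

open Real MeasureTheory Module

section HeatKernel

variable {E : Type*} [NormedAddCommGroup E] [InnerProductSpace ℝ E]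

noncomputable def heatKernel (t : ℝ) (x y : E) : ℝ :=
  (4 * π * t) ^ (-(finrank ℝ E : ℝ) / 2) * exp (-‖x - y‖ ^ 2 / (4 * t))

theorem heatKernel_nonneg {t : ℝ} (ht : 0 ≤ t) (x y : E) : 0 ≤ heatKernel t x y := by
  unfold heatKernel; positivity

theorem norm_sub_sq_div_add_norm_sub_sq_div {s u : ℝ} (hs : s ≠ 0) (hu : u ≠ 0)
    (hsu : s + u ≠ 0) (x y z : E) :
    ‖x - z‖ ^ 2 / s + ‖z - y‖ ^ 2 / u =
      ‖x - y‖ ^ 2 / (s + u) +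
        ‖z - ((u / (s + u)) • x + (s / (s + u)) • y)‖ ^ 2 / (s * u / (s + u)) := by
  simp only [← real_inner_self_eq_norm_sq, inner_sub_left, inner_sub_right, inner_add_left,
    inner_add_right, real_inner_smul_left, real_inner_smul_right, real_inner_comm x y,
    real_inner_comm x z, real_inner_comm y z]
  field_simp
  ring

theorem heatKernel_mul_heatKernel {s u : ℝ} (hs : 0 < s) (hu : 0 < u) (x y z : E) :
    heatKernel s x z * heatKernel u z y =
      heatKernel (s + u) x y *
        heatKernel (s * u / (s + u)) z ((u / (s + u)) • x + (s / (s + u)) • y) := by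
  have hsu : 0 < s + u := by positivity
  have hconst : ∀ r : ℝ, (4 * π * s) ^ r * (4 * π * u) ^ r =
      (4 * π * (s + u)) ^ r * (4 * π * (s * u / (s + u))) ^ r := by
    intro r
    rw [← mul_rpow (by positivity) (by positivity), ← mul_rpow (by positivity) (by positivity)]
    congr 1
    field_simp
  have hexp : -‖x - z‖ ^ 2 / (4 * s) + -‖z - y‖ ^ 2 / (4 * u) =
      -‖x - y‖ ^ 2 / (4 * (s + u)) +
        -‖z - ((u / (s + u)) • x + (s / (s + u)) • y)‖ ^ 2 / (4 * (s * u / (s + u))) := by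
    simp only [div_mul_eq_div_div_swap]
    linear_combination (-1 / 4 : ℝ) *
      norm_sub_sq_div_add_norm_sub_sq_div hs.ne' hu.ne' hsu.ne' x y z
  calc heatKernel s x z * heatKernel u z y
      = ((4 * π * s) ^ (-(finrank ℝ E : ℝ) / 2) *
          (4 * π * u) ^ (-(finrank ℝ E : ℝ) / 2)) *
            exp (-‖x - z‖ ^ 2 / (4 * s) + -‖z - y‖ ^ 2 / (4 * u)) := by
        rw [heatKernel, heatKernel, exp_add]; ring
    _ = _ := by rw [hconst, hexp, exp_add, heatKernel, heatKernel]; ring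

theorem heatKernel_rpow {s p : ℝ} (hs : 0 < s) (hp : 0 < p) (x y : E) :
    heatKernel s x y ^ p =
      ((4 * π * s) ^ (1 - p) / p) ^ ((finrank ℝ E : ℝ) / 2) * heatKernel (s / p) x y := by
  have h4πs : 0 < 4 * π * s := by positivity
  rw [heatKernel, heatKernel, mul_rpow (by positivity) (exp_pos _).le, ← exp_mul, ← mul_assoc,
    div_rpow (by positivity) hp.le, ← rpow_mul h4πs.le]
  congr 1
  · rw [← mul_div_assoc, div_rpow h4πs.le hp.le, neg_div, rpow_neg hp.le, div_inv_eq_mul,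
      ← rpow_mul h4πs.le, div_mul_eq_mul_div, mul_div_assoc,
      mul_div_cancel_right₀ _ (by positivity), ← rpow_add h4πs]
    ring_nf
  · congr 1; field_simp

theorem heatKernel_le_rpow_div_mul {u v : ℝ} (hu : 0 < u) (huv : u ≤ v) (x y : E) :
    heatKernel u x y ≤ (v / u) ^ ((finrank ℝ E : ℝ) / 2) * heatKernel v x y := by
  have hv : 0 < v := hu.trans_le huv
  have hconst : (4 * π * u) ^ (-(finrank ℝ E : ℝ) / 2) =
      (v / u) ^ ((finrank ℝ E : ℝ) / 2) * (4 * π * v) ^ (-(finrank ℝ E : ℝ) / 2) := by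
    rw [neg_div, rpow_neg (by positivity), rpow_neg (by positivity), ← div_eq_mul_inv,
      ← div_rpow (by positivity) (by positivity),
      show v / u / (4 * π * v) = (4 * π * u)⁻¹ by field_simp, inv_rpow (by positivity)]
  rw [heatKernel, heatKernel, hconst, mul_assoc]
  gcongr _ * (_ * exp ?_)
  rw [neg_div, neg_div, neg_le_neg_iff]
  gcongr

theorem heatKernel_le_rpow_mul_of_le {u v c : ℝ} (hu : 0 < u) (huv : u ≤ v) (hvc : v ≤ c * u)
    (x y : E) : heatKernel u x y ≤ c ^ ((finrank ℝ E : ℝ) / 2) * heatKernel v x y := by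
  have hv : 0 < v := hu.trans_le huv
  refine (heatKernel_le_rpow_div_mul hu huv x y).trans ?_
  exact mul_le_mul_of_nonneg_right (rpow_le_rpow (by positivity) ((div_le_iff₀ hu).2 hvc)
    (by positivity)) (heatKernel_nonneg hv.le x y)

variable [FiniteDimensional ℝ E] [MeasurableSpace E] [BorelSpace E]

theorem integral_heatKernel {t : ℝ} (ht : 0 < t) (y : E) : ∫ z, heatKernel t z y = 1 := by
  simp only [heatKernel]
  rw [integral_const_mul, integral_sub_right_eq_self (fun z : E ↦ exp (-‖z‖ ^ 2 / (4 * t))) y]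
  have hquad : ∀ z : E, -‖z‖ ^ 2 / (4 * t) = -(4 * t)⁻¹ * ‖z‖ ^ 2 := fun z ↦ by ring
  simp only [hquad]
  rw [GaussianFourier.integral_rexp_neg_mul_sq_norm (by positivity), div_inv_eq_mul,
    show π * (4 * t) = 4 * π * t by ring, neg_div, rpow_neg (by positivity),
    inv_mul_cancel₀ (by positivity)]

theorem integral_heatKernel_mul_heatKernel {s u : ℝ} (hs : 0 < s) (hu : 0 < u) (x y : E) :
    ∫ z, heatKernel s x z * heatKernel u z y = heatKernel (s + u) x y := by
  simp only [heatKernel_mul_heatKernel hs hu, integral_const_mul]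
  rw [integral_heatKernel (by positivity), mul_one]

theorem integral_heatKernel_mul_heatKernel_rpow {s u p : ℝ} (hs : 0 < s) (hu : 0 < u)
    (hp : 0 < p) (x y : E) :
    ∫ z, heatKernel s x z * heatKernel u z y ^ p =
      ((4 * π * u) ^ (1 - p) / p) ^ ((finrank ℝ E : ℝ) / 2) * heatKernel (s + u / p) x y := by
  simp only [heatKernel_rpow hu hp, mul_left_comm (heatKernel s x _), integral_const_mul]
  rw [integral_heatKernel_mul_heatKernel hs (by positivity)]

end HeatKernel

theorem heatKernel_euclideanSpace {d : ℕ} (t : ℝ) (x y : EuclideanSpace ℝ (Fin d)) :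
    heatKernel t x y = (4 * π * t) ^ (-(d : ℝ) / 2) * exp (-‖x - y‖ ^ 2 / (4 * t)) := by
  rw [heatKernel, finrank_euclideanSpace_fin]

namespace Real.HolderConjugate

theorem div_add_div_div_le {a b : ℝ} (hab : a.HolderConjugate b) {t : ℝ} (ht : 0 < t) :
    t / a + t / b / a ≤ t :=
  calc t / a + t / b / a ≤ t / a + t / b :=
        (add_le_add_iff_left _).2 (div_le_self (div_pos ht hab.symm.pos).le hab.lt.le)
    _ = t := by rw [div_eq_mul_inv, div_eq_mul_inv, ← mul_add, hab.inv_add_inv_eq_one, mul_one]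

theorem rpow_mul_rpow_eq {a b : ℝ} (hab : a.HolderConjugate b) {t : ℝ} (ht : 0 < t) (d : ℝ) :
    ((4 * π * (t / b)) ^ (1 - a) / a) ^ (d / 2) * a ^ (d / 2) =
      (a ^ (d / 2) * b ^ (d / (2 * b))) ^ a * ((4 * π * (a * t)) ^ (1 - a) / a) ^ (d / 2) := by
  have ha := hab.pos
  have hb := hab.symm.pos
  apply log_injOn_pos (Set.mem_Ioi.2 (by positivity)) (Set.mem_Ioi.2 (by positivity))
  simp (disch := positivity) only [log_mul, log_div, log_rpow]
  linear_combination (-d / 2 * log b) * hab.div_conj_eq_sub_one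

end Real.HolderConjugate

theorem gaussian_holder_estimate_general (d : ℕ) (a b : ℝ) (ha : 1 < a)
    (hab : 1 / a + 1 / b = 1) (x y : EuclideanSpace ℝ (Fin d)) (t : ℝ) (ht : 0 < t) :
    (∫ z : EuclideanSpace ℝ (Fin d),
        (4 * π * (t / a)) ^ (-(d : ℝ) / 2) * Real.exp (-‖x - z‖ ^ 2 / (4 * (t / a))) *
          ((4 * π * (t / b)) ^ (-(d : ℝ) / 2) *
            Real.exp (-‖z - y‖ ^ 2 / (4 * (t / b)))) ^ a) ^ (1 / a) ≤
      a ^ ((d : ℝ) / 2) * b ^ ((d : ℝ) / (2 * b)) *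
        ((4 * π * (a * t)) ^ (-(d : ℝ) / 2) * Real.exp (-‖x - y‖ ^ 2 / (4 * (a * t)))) := by
  have hpq : a.HolderConjugate b :=
    Real.holderConjugate_iff.2 ⟨ha, by simpa only [one_div] using hab⟩
  have ha0 := hpq.pos
  have hb0 := hpq.symm.pos
  have hg {s : ℝ} (hs : 0 < s) (z w : EuclideanSpace ℝ (Fin d)) : 0 ≤ heatKernel s z w :=
    heatKernel_nonneg hs.le z w
  simp only [← heatKernel_euclideanSpace]
  rw [one_div, rpow_inv_le_iff_of_pos (integral_nonneg fun z ↦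
    mul_nonneg (hg (by positivity) _ _) (rpow_nonneg (hg (by positivity) _ _) _))
    (mul_nonneg (by positivity) (hg (by positivity) _ _)) ha0]
  set C := ((4 * π * (t / b)) ^ (1 - a) / a) ^ ((d : ℝ) / 2)
  have hts : t ≤ a * (t / a + t / b / a) := by
    rw [mul_add, mul_div_cancel₀ _ ha0.ne', mul_div_cancel₀ _ ha0.ne']
    linarith [div_pos ht hb0]
  calc ∫ z, heatKernel (t / a) x z * heatKernel (t / b) z y ^ a
      = C * heatKernel (t / a + t / b / a) x y := by
        rw [integral_heatKernel_mul_heatKernel_rpow (by positivity) (by positivity) ha0,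
          finrank_euclideanSpace_fin]
    _ ≤ C * (a ^ ((d : ℝ) / 2) * heatKernel t x y) := by
        gcongr
        simpa only [finrank_euclideanSpace_fin] using
          heatKernel_le_rpow_mul_of_le (by positivity) (hpq.div_add_div_div_le ht) hts x y
    _ = (a ^ ((d : ℝ) / 2) * b ^ ((d : ℝ) / (2 * b)) * heatKernel (a * t) x y) ^ a := by
        rw [mul_rpow (by positivity) (hg (by positivity) _ _),
          heatKernel_rpow (by positivity) ha0, finrank_euclideanSpace_fin,
          mul_div_cancel_left₀ t ha0.ne', ← mul_assoc, ← mul_assoc,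
          hpq.rpow_mul_rpow_eq ht]

/-- The Gaussian estimate used after Hölder's inequality in Lemma 3.2:
`(∫ g_{t/a}(x,z) g_{t/b}(z,y)^a dz)^{1/a} ≤ a^{d/2} b^{d/(2b)} g_{at}(x,y)`. -/
theorem gaussian_holder_estimate (d : ℕ) (hd : 1 ≤ d) (a b : ℝ) (ha : 1 < a) (hb : 1 < b)
    (hab : 1 / a + 1 / b = 1) (x y : EuclideanSpace ℝ (Fin d)) (t : ℝ) (ht : 0 < t) :
    (∫ z : EuclideanSpace ℝ (Fin d),
        (4 * π * (t / a)) ^ (-(d : ℝ) / 2) * Real.exp (-‖x - z‖ ^ 2 / (4 * (t / a))) *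
          ((4 * π * (t / b)) ^ (-(d : ℝ) / 2) *
            Real.exp (-‖z - y‖ ^ 2 / (4 * (t / b)))) ^ a) ^ (1 / a) ≤
      a ^ ((d : ℝ) / 2) * b ^ ((d : ℝ) / (2 * b)) *
        ((4 * π * (a * t)) ^ (-(d : ℝ) / 2) * Real.exp (-‖x - y‖ ^ 2 / (4 * (a * t)))) :=
  gaussian_holder_estimate_general d a b ha hab x y t ht
end
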